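/- Let R ∈ SO(3) and let {u₁, u₂, u₃} be an orthonormal basis of ℝ³. Then min_{i ∈ {1,2,3}} |R·R_a(π, uᵢ)|_I² ≤ 1 − (1/3)|R|_I². In particular, if |R|_I² ≥ q for some q ∈ [0,1], then after right-multiplying R by the minimizing rotation R_a(π, u), the squared attitude distance decreases by at least (4/3)q − 1. -/

import Mathlib

open Matrix

/-- `R ∈ SO(3)`: `R Rᵀ = I` and `det R = 1`. -/
def IsSO3 (R : Matrix (Fin 3) (Fin 3) ℝ) : Prop := R * Rᵀ = 1 ∧ R.det = 1

/-- Squared normalized Euclidean distance on SO(3): `|R|_I² = (1/4) tr(I - R)`. -/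
noncomputable def distI2 (R : Matrix (Fin 3) (Fin 3) ℝ) : ℝ :=
  (1/4) * Matrix.trace (1 - R)

/-!
The three half-turns about an orthonormal basis average out: since `∑ᵢ uᵢuᵢᵀ = I`, the traces
`tr(R uᵢuᵢᵀ)` add up to `tr R`, so `∑ᵢ |R R_a(π,uᵢ)|_I² = 3 - |R|_I²`.
The smallest of the three terms is at most their mean `1 - |R|_I²/3`.
-/

section Orthonormal

variable {n K : Type*} [Fintype n] [CommRing K]

theorem sum_vecMulVec_self_eq_transpose_mul (u : n → n → K) :
    ∑ i, vecMulVec (u i) (u i) = (of u)ᵀ * of u := by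
  ext j k
  simp [Matrix.sum_apply, vecMulVec_apply, mul_apply]

theorem sum_vecMulVec_self_eq_one [DecidableEq n] {u : n → n → K}
    (hu : ∀ i j, u i ⬝ᵥ u j = if i = j then 1 else 0) :
    ∑ i, vecMulVec (u i) (u i) = 1 := by
  have hrows : of u * (of u)ᵀ = 1 := by
    ext i j
    simpa [mul_apply, one_apply, dotProduct] using hu i j
  rw [sum_vecMulVec_self_eq_transpose_mul, mul_eq_one_comm.mp hrows]

theorem sum_trace_mul_vecMulVec_self [DecidableEq n] {u : n → n → K}
    (hu : ∀ i j, u i ⬝ᵥ u j = if i = j then 1 else 0) (R : Matrix n n K) :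
    ∑ i, trace (R * vecMulVec (u i) (u i)) = trace R := by
  rw [← trace_sum, ← Finset.mul_sum, sum_vecMulVec_self_eq_one hu, Matrix.mul_one]

end Orthonormal

theorem distI2_eq (R : Matrix (Fin 3) (Fin 3) ℝ) : distI2 R = (3 - trace R) / 4 := by
  simp only [distI2, trace_sub, trace_one, Fintype.card_fin]
  ring

theorem distI2_mul_halfTurn (R : Matrix (Fin 3) (Fin 3) ℝ) (v : Fin 3 → ℝ) :
    distI2 (R * (-1 + (2:ℝ) • vecMulVec v v)) =
      (3 + trace R - 2 * trace (R * vecMulVec v v)) / 4 := by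
  rw [distI2_eq, Matrix.mul_add, Matrix.mul_neg, Matrix.mul_one, Matrix.mul_smul, trace_add,
    trace_neg, trace_smul, smul_eq_mul]
  ring

theorem sum_distI2_mul_halfTurn (R : Matrix (Fin 3) (Fin 3) ℝ) {u : Fin 3 → Fin 3 → ℝ}
    (hu : ∀ i j, u i ⬝ᵥ u j = if i = j then 1 else 0) :
    ∑ i, distI2 (R * (-1 + (2:ℝ) • vecMulVec (u i) (u i))) = 3 - distI2 R := by
  have htrace := sum_trace_mul_vecMulVec_self hu R
  simp only [distI2_mul_halfTurn, Fin.sum_univ_three] at htrace ⊢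
  rw [distI2_eq]
  linarith

theorem min_min_le_average {α : Type*} [Field α] [LinearOrder α] [IsStrictOrderedRing α]
    (a b c : α) : min a (min b c) ≤ (a + b + c) / 3 := by
  have := min_le_left a (min b c)
  have := (min_le_right a (min b c)).trans (min_le_left b c)
  have := (min_le_right a (min b c)).trans (min_le_right b c)
  linarith

theorem stmt14 (R : Matrix (Fin 3) (Fin 3) ℝ) (u : Fin 3 → Fin 3 → ℝ)
    (hu : ∀ i j, u i ⬝ᵥ u j = if i = j then 1 else 0) :
    (min (distI2 (R * (-1 + (2:ℝ) • Matrix.vecMulVec (u 0) (u 0))))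
      (min (distI2 (R * (-1 + (2:ℝ) • Matrix.vecMulVec (u 1) (u 1))))
        (distI2 (R * (-1 + (2:ℝ) • Matrix.vecMulVec (u 2) (u 2))))) ≤
      1 - (1/3) * distI2 R) ∧
    (∀ q : ℝ, 0 ≤ q → q ≤ 1 → q ≤ distI2 R →
      (4/3) * q - 1 ≤ distI2 R -
        min (distI2 (R * (-1 + (2:ℝ) • Matrix.vecMulVec (u 0) (u 0))))
          (min (distI2 (R * (-1 + (2:ℝ) • Matrix.vecMulVec (u 1) (u 1))))
            (distI2 (R * (-1 + (2:ℝ) • Matrix.vecMulVec (u 2) (u 2)))))) := by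
  have hsum := sum_distI2_mul_halfTurn R hu
  rw [Fin.sum_univ_three] at hsum
  have hmin := min_min_le_average (distI2 (R * (-1 + (2:ℝ) • vecMulVec (u 0) (u 0))))
    (distI2 (R * (-1 + (2:ℝ) • vecMulVec (u 1) (u 1))))
    (distI2 (R * (-1 + (2:ℝ) • vecMulVec (u 2) (u 2))))
  refine ⟨by linarith, fun q _ _ hq => by linarith⟩
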